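/- Let n be a positive integer and let p be a real polynomial of degree at most n that is nonnegative on [-1,1] and satisfies p(1) = 1. Then max_{x ∈ [-1,1]} (1-x)·p(x) = 2/(n+1)² holds if and only if p = g_n, i.e., if and only if (n+1)²·(1-x)·p(x) = 1 - T_{n+1}(x) for all x. -/

import Mathlib

/-!
Put `N = (n+1)²`. If `N(1-x)p(x) ≤ 2` on `[-1,1]`, then `q = N(1-X)p - (1 - T_{n+1})` has degree
at most `n+1` and a double root at `1` (because `T_{n+1}'(1) = N` and `p(1) = 1`). At the extremal
points `x_k = cos(kπ/(n+1))`, `k = 1, …, n+1`, we have `T_{n+1}(x_k) = (-1)^k` and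
`0 ≤ N(1-x_k)p(x_k) ≤ 2`, so `(-1)^k q(x_k) ≥ 0`. Hence `q/(X-1)²`, of degree below `n`, weakly
alternates in sign at `n+1` decreasing points. Dividing out a root that the intermediate value
theorem gives between the first two points leaves weak alternation at one point fewer, so such a
polynomial vanishes. Conversely, if `N(1-x)p(x) = 1 - T_{n+1}(x)`, the value `2/N` is attained at
`x_1` and never exceeded since `T_{n+1} ≥ -1` on `[-1,1]`.
-/

open Polynomial Polynomial.Chebyshev

namespace Polynomial

theorem X_sub_C_sq_dvd_of_isRoot_derivative {R : Type*} [CommRing R] {p : R[X]} {a : R}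
    (hp : p.IsRoot a) (hp' : (derivative p).IsRoot a) : (X - C a) ^ 2 ∣ p := by
  rcases eq_or_ne p 0 with rfl | h0
  · exact dvd_zero _
  exact (le_rootMultiplicity_iff h0).mp ((one_lt_rootMultiplicity_iff_isRoot h0).mpr ⟨hp, hp'⟩)

theorem alternating_succAbove_of_eq_X_sub_C_mul {m : ℕ} {h g : ℝ[X]} {s : ℝ}
    (hfac : h = (X - C s) * g) {t : Fin (m + 2) → ℝ}
    (hsign : ∀ i : Fin (m + 2), 0 ≤ (-1) ^ (i : ℕ) * h.eval (t i)) {k : Fin (m + 2)}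
    (hlt : ∀ j < k, s < t j) (hgt : ∀ j, k < j → t j < s) (i : Fin (m + 1)) :
    0 ≤ (-1) ^ (i : ℕ) * g.eval (t (k.succAbove i)) := by
  have heval (l : ℕ) (x : ℝ) : (-1) ^ l * h.eval x = (x - s) * ((-1) ^ l * g.eval x) := by
    rw [hfac, eval_mul, eval_sub, eval_X, eval_C]
    ring
  by_cases hik : i.castSucc < k
  · rw [Fin.succAbove_of_castSucc_lt _ _ hik]
    have := hsign i.castSucc
    rw [heval] at this
    exact nonneg_of_mul_nonneg_right this (sub_pos.mpr (hlt _ hik))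
  · rw [Fin.succAbove_of_le_castSucc _ _ (not_lt.mp hik)]
    have := hsign i.succ
    rw [heval, Fin.val_succ, pow_succ] at this
    refine nonneg_of_mul_nonneg_right (a := s - t i.succ) (by linarith) ?_
    exact sub_pos.mpr (hgt _ ((not_lt.mp hik).trans_lt i.castSucc_lt_succ))

theorem le_natDegree_of_alternating {m : ℕ} {h : ℝ[X]} (h0 : h ≠ 0) {t : Fin (m + 1) → ℝ}
    (ht : StrictAnti t) (hsign : ∀ i : Fin (m + 1), 0 ≤ (-1) ^ (i : ℕ) * h.eval (t i)) :
    m ≤ h.natDegree := by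
  induction m generalizing h with
  | zero => exact Nat.zero_le _
  | succ m ih =>
    obtain ⟨s, hs, hroot⟩ : ∃ s ∈ Set.Icc (t 1) (t 0), h.eval s = 0 :=
      intermediate_value_Icc (ht.antitone (Fin.zero_le 1)) h.continuous.continuousOn
        ⟨by simpa using hsign 1, by simpa using hsign 0⟩
    obtain ⟨g, rfl⟩ := dvd_iff_isRoot.mpr hroot
    have hg : g ≠ 0 := right_ne_zero_of_mul h0
    -- Delete the node `t 1` if it is the root `s`, and `t 0` otherwise.
    obtain ⟨k, hlt, hgt⟩ : ∃ k : Fin (m + 2), (∀ j < k, s < t j) ∧ ∀ j, k < j → t j < s := by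
      by_cases hs1 : s = t 1
      · refine ⟨1, fun j hj => ?_, fun j hj => hs1 ▸ ht hj⟩
        rw [(Fin.lt_one_iff j).mp hj, hs1]
        exact ht Fin.zero_lt_one
      · refine ⟨0, fun j hj => absurd hj (Fin.not_lt_zero j), fun j hj => ?_⟩
        exact (ht.antitone (Fin.one_le_of_ne_zero hj.ne')).trans_lt
          (lt_of_le_of_ne hs.1 (Ne.symm hs1))
    have := ih hg (ht.comp_strictMono (Fin.strictMono_succAbove k))
      (alternating_succAbove_of_eq_X_sub_C_mul rfl hsign hlt hgt)
    rw [natDegree_mul (X_sub_C_ne_zero s) hg, natDegree_X_sub_C]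
    omega

end Polynomial

namespace Polynomial.Chebyshev

theorem strictAnti_node_succ (n : ℕ) : StrictAnti fun i : Fin (n + 1) => node (n + 1) (i + 1) :=
  fun _ _ hij => node_lt (by omega) (by simpa using hij)

theorem node_succ_lt_one (n : ℕ) (i : Fin (n + 1)) : node (n + 1) (i + 1) < 1 :=
  node_eq_one (n := n + 1) ▸ node_lt (by omega) (by omega)

theorem eval_T_succ_node {n k : ℕ} (hk : k ≤ n + 1) :
    (T ℝ ((n : ℤ) + 1)).eval (node (n + 1) k) = (-1) ^ k := by
  simpa using eval_T_real_node (n := n + 1) (Finset.mem_Iic.mpr hk)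

end Polynomial.Chebyshev

theorem natDegree_C_mul_one_sub_X_mul_sub_one_sub_T_le {n : ℕ} {p : ℝ[X]}
    (hdeg : p.natDegree ≤ n) (c : ℝ) :
    (C c * (1 - X) * p - (1 - T ℝ ((n : ℤ) + 1))).natDegree ≤ n + 1 := by
  refine (natDegree_sub_le _ _).trans (max_le ?_ ?_)
  · compute_degree
    omega
  · refine (natDegree_sub_le _ _).trans (max_le (by simp) ?_)
    rw [natDegree_T]
    omega

theorem C_mul_one_sub_X_mul_eq_one_sub_T_of_le_two {n : ℕ} {p : ℝ[X]} (hdeg : p.natDegree ≤ n)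
    (hnonneg : ∀ x ∈ Set.Icc (-1 : ℝ) 1, 0 ≤ p.eval x) (hone : p.eval 1 = 1)
    (hle : ∀ x ∈ Set.Icc (-1 : ℝ) 1, ((n : ℝ) + 1) ^ 2 * (1 - x) * p.eval x ≤ 2) :
    C (((n : ℝ) + 1) ^ 2) * (1 - X) * p = 1 - T ℝ ((n : ℤ) + 1) := by
  set q := C (((n : ℝ) + 1) ^ 2) * (1 - X) * p - (1 - T ℝ ((n : ℤ) + 1)) with hq
  suffices q = 0 from sub_eq_zero.mp this
  obtain ⟨h, hfac⟩ : (X - C 1) ^ 2 ∣ q := X_sub_C_sq_dvd_of_isRoot_derivative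
    (by simp [q, T_eval_one]) (by simp [q, derivative_T_eval_one, hone])
  by_contra hq0
  have h0 : h ≠ 0 := by
    rintro rfl
    exact hq0 (by simpa using hfac)
  have hqdeg := natDegree_C_mul_one_sub_X_mul_sub_one_sub_T_le hdeg (((n : ℝ) + 1) ^ 2)
  rw [← hq, hfac, natDegree_mul (pow_ne_zero 2 (X_sub_C_ne_zero 1)) h0, natDegree_pow,
    natDegree_X_sub_C] at hqdeg
  have hsign (i : Fin (n + 1)) : 0 ≤ (-1) ^ (i : ℕ) * (-h).eval (node (n + 1) (i + 1)) := by
    set x := node (n + 1) (i + 1)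
    have hx : x ∈ Set.Icc (-1 : ℝ) 1 := node_mem_Icc
    have hqx : 0 ≤ (-1) ^ ((i : ℕ) + 1) * q.eval x := by
      have hf0 : 0 ≤ ((n : ℝ) + 1) ^ 2 * (1 - x) * p.eval x :=
        mul_nonneg (mul_nonneg (by positivity) (by linarith [hx.2])) (hnonneg x hx)
      have hf2 := hle x hx
      have hT : (T ℝ ((n : ℤ) + 1)).eval x = (-1) ^ ((i : ℕ) + 1) := eval_T_succ_node (by omega)
      simp only [q, eval_sub, eval_mul, eval_C, eval_one, eval_X, hT]
      rcases neg_one_pow_eq_or ℝ ((i : ℕ) + 1) with e | e <;> rw [e] <;> linarith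
    have hx1 : 0 < (x - 1) ^ 2 := by nlinarith [node_succ_lt_one n i]
    rw [hfac, eval_mul, eval_pow, eval_sub, eval_X, eval_C, pow_succ, mul_left_comm] at hqx
    simpa using nonneg_of_mul_nonneg_right hqx hx1
  have := le_natDegree_of_alternating (neg_ne_zero.mpr h0) (strictAnti_node_succ n) hsign
  rw [natDegree_neg] at this
  omega

theorem isGreatest_image_Icc_of_eq_one_sub_T {n : ℕ} {f : ℝ → ℝ}
    (hf : ∀ x, ((n : ℝ) + 1) ^ 2 * f x = 1 - (T ℝ ((n : ℤ) + 1)).eval x) :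
    IsGreatest (f '' Set.Icc (-1) 1) (2 / ((n : ℝ) + 1) ^ 2) := by
  have hf' (x : ℝ) : f x = (1 - (T ℝ ((n : ℤ) + 1)).eval x) / ((n : ℝ) + 1) ^ 2 := by
    rw [← hf]
    field_simp
  refine ⟨⟨node (n + 1) 1, node_mem_Icc, ?_⟩, ?_⟩
  · rw [hf', eval_T_succ_node (by omega)]
    norm_num
  · rintro _ ⟨x, hx, rfl⟩
    rw [hf']
    gcongr
    linarith [(eval_T_real_mem_Icc ((n : ℤ) + 1) hx).1]

theorem modified_chebyshev_equality_case
    (n : ℕ) (p : Polynomial ℝ)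
    (hdeg : p.natDegree ≤ n)
    (hnonneg : ∀ x ∈ Set.Icc (-1 : ℝ) 1, 0 ≤ p.eval x)
    (hone : p.eval 1 = 1) :
    sSup ((fun x : ℝ => (1 - x) * p.eval x) '' Set.Icc (-1 : ℝ) 1) =
        2 / ((n : ℝ) + 1) ^ 2 ↔
      ∀ x : ℝ, ((n : ℝ) + 1) ^ 2 * (1 - x) * p.eval x =
        1 - (Polynomial.Chebyshev.T ℝ ((n : ℤ) + 1)).eval x := by
  constructor
  · intro hsup x
    have hbdd : BddAbove ((fun x : ℝ => (1 - x) * p.eval x) '' Set.Icc (-1 : ℝ) 1) :=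
      (isCompact_Icc.image (by fun_prop)).bddAbove
    have hle (y : ℝ) (hy : y ∈ Set.Icc (-1 : ℝ) 1) :
        ((n : ℝ) + 1) ^ 2 * (1 - y) * p.eval y ≤ 2 := by
      have := hsup ▸ le_csSup hbdd ⟨y, hy, rfl⟩
      rw [le_div_iff₀ (by positivity)] at this
      linarith
    simpa using
      congrArg (eval x) (C_mul_one_sub_X_mul_eq_one_sub_T_of_le_two hdeg hnonneg hone hle)
  · intro h
    exact (isGreatest_image_Icc_of_eq_one_sub_T fun x => by rw [← h x]; ring).csSup_eq
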